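/- Let j > 1 be an integer, p an odd prime coprime to 2j, q a power of p, and a the multiplicative order of p modulo 2j. Then for n ≥ 1, the Fibonacci polynomial F_n(T) is a perfect j-th power in F_q[T] if and only if n = p^{ak} for some natural number k. -/

import Mathlib

open Polynomial

noncomputable def fibPoly (R : Type*) [CommRing R] : ℕ → Polynomial R
  | 0 => 0
  | 1 => 1
  | n + 2 => Polynomial.X * fibPoly R (n + 1) + fibPoly R n

/-!
With `M = !![X, 1; 1, 0]` one has `M ^ (n + 1) = F_(n+1) • M + F_n • 1`, so in characteristic `p`
the Frobenius of the commutative algebra generated by `M` gives `F_(n p) = F_n ^ p F_p`. The matrix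
`s = 2 M - X` satisfies `s ^ 2 = X ^ 2 + 4`, and comparing `s ^ p = s (s ^ 2) ^ ((p - 1) / 2)` with
`s ^ p = 2 M ^ p - X ^ p` gives `F_p = (X ^ 2 + 4) ^ ((p - 1) / 2)`. Hence for `p ∤ n`,
`F_(p ^ m n) = F_n ^ (p ^ m) (X ^ 2 + 4) ^ ((p ^ m - 1) / 2)`.

By Cassini's identity and `(X ^ 2 + 4) F_n' + (n + 1) X F_n = 2 n F_(n+1)`, the polynomial `F_n` is
separable and coprime to `X ^ 2 + 4` when `p ∤ n`, and `X ^ 2 + 4` is separable too. Counting the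
multiplicity of a prime factor, if this is a `j`-th power then either `n ≥ 2` and `j ∣ p ^ m`, which
`gcd(j, p) = 1` rules out, or `n = 1` and `j ∣ (p ^ m - 1) / 2`, that is `p ^ m ≡ 1 [MOD 2 j]`.
-/

theorem dvd_of_pow_mul_eq_pow {R : Type*} [CommMonoidWithZero R] [UniqueFactorizationMonoid R]
    {x y g : R} {k j : ℕ} (hx : Squarefree x) (hxu : ¬IsUnit x) (hxy : IsRelPrime x y)
    (h : x ^ k * y = g ^ j) : j ∣ k := by
  have : Nontrivial R := ⟨⟨x, 1, fun h => hxu (h ▸ isUnit_one)⟩⟩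
  obtain ⟨r, hr, hrx⟩ := WfDvdMonoid.exists_irreducible_factor hxu hx.ne_zero
  have hrp : Prime r := UniqueFactorizationMonoid.irreducible_iff_prime.mp hr
  have hrx1 : emultiplicity r x = 1 := by
    refine emultiplicity_eq_coe.mpr ⟨by simpa using hrx, fun hr2 => hr.not_isUnit (hx r ?_)⟩
    simpa [pow_two] using hr2
  have hry : emultiplicity r y = 0 :=
    emultiplicity_eq_zero.mpr fun hry => hr.not_isUnit (hxy hrx hry)
  have hmul := congrArg (emultiplicity r) h
  rw [emultiplicity_mul hrp, emultiplicity_pow hrp, emultiplicity_pow hrp, hrx1, hry] at hmul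
  cases hg : emultiplicity r g with
  | top =>
    rcases eq_or_ne j 0 with rfl | hj
    · simpa using hmul
    · simp [hg, hj] at hmul
  | coe e =>
    rw [hg] at hmul
    simp only [mul_one, add_zero] at hmul
    exact ⟨e, by exact_mod_cast hmul⟩

theorem orderOf_dvd_iff_dvd_pow_div_two {p j m : ℕ} (hp : Odd p) :
    orderOf (p : ZMod (2 * j)) ∣ m ↔ j ∣ p ^ m / 2 := by
  have hodd := Nat.two_mul_div_two_add_one_of_odd (hp.pow (n := m))
  rw [orderOf_dvd_iff_pow_eq_one, ← Nat.cast_pow, ← Nat.cast_one, ZMod.natCast_eq_natCast_iff,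
    Nat.ModEq.comm, Nat.modEq_iff_dvd' (hp.pow.pos), show p ^ m - 1 = 2 * (p ^ m / 2) by omega,
    Nat.mul_dvd_mul_iff_left two_pos]

theorem Nat.mul_div_two_of_odd {a b : ℕ} (ha : Odd a) (hb : Odd b) :
    a * b / 2 = a / 2 * b + b / 2 := by
  obtain ⟨x, rfl⟩ := ha
  obtain ⟨y, rfl⟩ := hb
  rw [show (2 * x + 1) * (2 * y + 1) = 2 * (x * (2 * y + 1) + y) + 1 by ring,
    show (2 * x + 1) / 2 = x by omega, show (2 * y + 1) / 2 = y by omega]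
  omega

theorem isUnit_natCast_of_coprime {R : Type*} [Ring R] {p n : ℕ} [CharP R p]
    (h : n.Coprime p) : IsUnit (n : R) := by
  simpa using ((ZMod.isUnit_iff_coprime n p).mpr h).map (ZMod.castHom (dvd_refl p) R)

theorem isUnit_two_of_odd {R : Type*} [Ring R] {p : ℕ} [CharP R p] (hp : Odd p) :
    IsUnit (2 : R) := by
  simpa using isUnit_natCast_of_coprime (R := R) (Nat.coprime_two_left.mpr hp)

section CommRing

variable {R : Type*} [CommRing R]

@[simp] theorem fibPoly_zero : fibPoly R 0 = 0 := rfl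

@[simp] theorem fibPoly_one : fibPoly R 1 = 1 := rfl

theorem fibPoly_add_two (n : ℕ) :
    fibPoly R (n + 2) = X * fibPoly R (n + 1) + fibPoly R n := rfl

theorem natDegree_fibPoly_succ [Nontrivial R] (n : ℕ) : (fibPoly R (n + 1)).natDegree = n := by
  suffices h : (fibPoly R (n + 1)).Monic ∧ (fibPoly R (n + 1)).natDegree = n from h.2
  induction n using Nat.twoStepInduction with
  | zero => simp
  | one => simp [fibPoly_add_two]
  | more n ih ih' =>
    rw [show n + 1 + 1 = n + 2 from rfl] at ih'
    have hdeg : (X * fibPoly R (n + 2)).natDegree = n + 2 := by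
      rw [monic_X.natDegree_mul ih'.1, natDegree_X, ih'.2, add_comm]
    have hlt : (fibPoly R (n + 1)).natDegree < (X * fibPoly R (n + 2)).natDegree := by
      omega
    rw [show n + 2 + 1 = n + 3 from rfl, fibPoly_add_two]
    exact ⟨(monic_X.mul ih'.1).add_of_left (degree_lt_degree hlt),
      by rw [natDegree_add_eq_left_of_natDegree_lt hlt, hdeg]⟩

theorem fibPoly_cassini (n : ℕ) :
    fibPoly R (n + 1) ^ 2 - X * fibPoly R (n + 1) * fibPoly R n - fibPoly R n ^ 2 = (-1) ^ n := by
  induction n with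
  | zero => simp
  | succ n ih =>
    rw [fibPoly_add_two, pow_succ]
    linear_combination -ih

theorem isCoprime_fibPoly_succ (n : ℕ) : IsCoprime (fibPoly R n) (fibPoly R (n + 1)) := by
  have hsign : ((-1 : R[X]) ^ n) ^ 2 = 1 := by rw [← pow_mul, mul_comm, pow_mul]; simp
  refine ⟨-(-1) ^ n * fibPoly R n, (-1) ^ n * (fibPoly R (n + 1) - X * fibPoly R n), ?_⟩
  linear_combination (-1) ^ n * fibPoly_cassini (R := R) n + hsign

theorem derivative_fibPoly (n : ℕ) :
    (X ^ 2 + 4) * derivative (fibPoly R n) + ((n : R[X]) + 1) * X * fibPoly R n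
      = 2 * (n : R[X]) * fibPoly R (n + 1) := by
  induction n using Nat.twoStepInduction with
  | zero => simp
  | one => simp [fibPoly_add_two]; ring
  | more n ih ih' =>
    have h₁ : fibPoly R (n + 2) = X * fibPoly R (n + 1) + fibPoly R n := fibPoly_add_two n
    have h₂ : fibPoly R (n + 3) = X * fibPoly R (n + 2) + fibPoly R (n + 1) :=
      fibPoly_add_two (n + 1)
    have hd : derivative (fibPoly R (n + 2))
        = fibPoly R (n + 1) + X * derivative (fibPoly R (n + 1)) + derivative (fibPoly R n) := by
      rw [h₁, derivative_add, derivative_mul, derivative_X, one_mul]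
    rw [show n + 1 + 1 = n + 2 from rfl] at ih'
    rw [show n + 2 + 1 = n + 3 from rfl, hd]
    push_cast at ih' ⊢
    linear_combination X * ih' + ih - 2 * ((n : R[X]) + 2) * h₂ + ((n : R[X]) + 1) * X * h₁

theorem isCoprime_fibPoly_mul_derivative {n : ℕ} (hn : IsUnit (2 * (n : R[X]))) :
    IsCoprime (fibPoly R n) ((X ^ 2 + 4) * derivative (fibPoly R n)) := by
  have h := (isCoprime_mul_unit_left_right hn _ _).mpr (isCoprime_fibPoly_succ (R := R) n)
  rwa [← derivative_fibPoly, mul_comm _ (fibPoly R n),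
    IsCoprime.add_mul_left_right_iff] at h

theorem separable_fibPoly {n : ℕ} (hn : IsUnit (2 * (n : R[X]))) :
    (fibPoly R n).Separable :=
  (isCoprime_fibPoly_mul_derivative hn).of_mul_right_right

theorem isCoprime_fibPoly_X_sq_add_four {n : ℕ} (hn : IsUnit (2 * (n : R[X]))) :
    IsCoprime (fibPoly R n) (X ^ 2 + 4) :=
  (isCoprime_fibPoly_mul_derivative hn).of_mul_right_left

noncomputable def fibMatrix (R : Type*) [CommRing R] : Matrix (Fin 2) (Fin 2) R[X] :=
  !![X, 1; 1, 0]

theorem fibMatrix_sq : fibMatrix R ^ 2 = (X : R[X]) • fibMatrix R + 1 := by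
  ext i j : 1
  fin_cases i <;> fin_cases j <;> simp [fibMatrix, sq]

theorem fibMatrix_pow_succ (n : ℕ) :
    fibMatrix R ^ (n + 1) = fibPoly R (n + 1) • fibMatrix R + fibPoly R n • 1 := by
  induction n with
  | zero => simp
  | succ n ih =>
    rw [pow_succ, ih, add_mul, smul_mul_assoc, smul_mul_assoc, ← sq, fibMatrix_sq, one_mul,
      fibPoly_add_two]
    module

theorem fibMatrix_pow_apply_zero_one (n : ℕ) : (fibMatrix R ^ n) 0 1 = fibPoly R n := by
  cases n with
  | zero => simp
  | succ n => rw [fibMatrix_pow_succ]; simp [fibMatrix]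

variable {p : ℕ} [Fact p.Prime] [CharP R p]

theorem fibPoly_mul_prime (n : ℕ) : fibPoly R (n * p) = fibPoly R n ^ p * fibPoly R p := by
  cases n with
  | zero => simp [zero_pow (Fact.out : p.Prime).ne_zero]
  | succ n =>
    have hcomm : Commute (fibPoly R (n + 1) • fibMatrix R) (fibPoly R n • 1) :=
      ((Commute.one_right _).smul_right _).smul_left _
    rw [← fibMatrix_pow_apply_zero_one, pow_mul, fibMatrix_pow_succ,
      add_pow_char_of_commute p hcomm, _root_.smul_pow, _root_.smul_pow, one_pow]
    simp [fibMatrix_pow_apply_zero_one]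

theorem fibPoly_prime (hp : Odd p) : fibPoly R p = (X ^ 2 + 4) ^ (p / 2) := by
  set s : Matrix (Fin 2) (Fin 2) R[X] := !![X, 2; 2, -X]
  have hs : s = (2 : R[X]) • fibMatrix R - (X : R[X]) • 1 := by
    ext i j : 1
    fin_cases i <;> fin_cases j <;> simp [s, fibMatrix, two_mul]
  have hs2 : s ^ 2 = (X ^ 2 + 4 : R[X]) • 1 := by
    ext i j : 1
    fin_cases i <;> fin_cases j <;> simp [s, sq] <;> ring
  have hcomm : Commute ((2 : R[X]) • fibMatrix R) ((X : R[X]) • 1) :=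
    ((Commute.one_right _).smul_right _).smul_left _
  have htwo : (2 : R[X]) ^ p = 2 := by
    simpa [one_add_one_eq_two] using add_pow_char (1 : R[X]) 1 (p := p)
  have hsp : s ^ p = s * (X ^ 2 + 4 : R[X]) ^ (p / 2) • 1 := by
    conv_lhs => rw [← Nat.two_mul_div_two_add_one_of_odd hp]
    rw [pow_succ', pow_mul, hs2, _root_.smul_pow, one_pow]
  rw [hs, sub_pow_char_of_commute p hcomm, _root_.smul_pow, _root_.smul_pow, htwo, ← hs] at hsp
  have h01 : 2 * fibPoly R p = 2 * (X ^ 2 + 4) ^ (p / 2) := by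
    simpa [fibMatrix_pow_apply_zero_one, s, mul_comm] using congrArg (· 0 1) hsp
  exact (isUnit_two_of_odd hp).mul_left_cancel h01

theorem fibPoly_prime_pow_mul (hp : Odd p) (m n : ℕ) :
    fibPoly R (p ^ m * n) = fibPoly R n ^ p ^ m * (X ^ 2 + 4) ^ (p ^ m / 2) := by
  induction m with
  | zero => simp
  | succ m ih =>
    rw [pow_succ, mul_right_comm, fibPoly_mul_prime, ih, fibPoly_prime hp, mul_pow, ← pow_mul,
      ← pow_mul, mul_assoc, ← pow_add, ← Nat.mul_div_two_of_odd hp.pow hp]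

theorem fibPoly_prime_pow (hp : Odd p) (m : ℕ) :
    fibPoly R (p ^ m) = (X ^ 2 + 4) ^ (p ^ m / 2) := by
  simpa using fibPoly_prime_pow_mul (R := R) hp m 1

end CommRing

section Field

variable {F : Type*} [Field F] {p : ℕ} [CharP F p]

theorem separable_X_sq_add_four (h2 : (2 : F) ≠ 0) : (X ^ 2 + 4 : F[X]).Separable := by
  have h4 : (-4 : F) ≠ 0 := by simpa [show (4 : F) = 2 * 2 by norm_num] using h2
  have h := separable_X_pow_sub_C (n := 2) (-4 : F) (by simpa using h2) h4
  rwa [C_neg, sub_neg_eq_add, map_ofNat] at h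

theorem dvd_of_X_sq_add_four_pow_eq_pow (hp : Odd p) {e j : ℕ} {g : F[X]}
    (h : (X ^ 2 + 4) ^ e = g ^ j) : j ∣ e := by
  have hdeg : (X ^ 2 + 4 : F[X]).natDegree = 2 := by compute_degree!
  exact dvd_of_pow_mul_eq_pow (separable_X_sq_add_four (isUnit_two_of_odd hp).ne_zero).squarefree
    (not_isUnit_of_natDegree_pos _ (by omega)) isRelPrime_one_right (by rwa [mul_one])

theorem dvd_of_fibPoly_pow_mul_eq_pow [Fact p.Prime] (hp : Odd p) {n : ℕ} (hpn : ¬p ∣ n)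
    (hn : 2 ≤ n) {k e j : ℕ} {g : F[X]} (h : fibPoly F n ^ k * (X ^ 2 + 4) ^ e = g ^ j) :
    j ∣ k := by
  have hu : IsUnit (2 * (n : F[X])) := (isUnit_two_of_odd hp).mul
    (isUnit_natCast_of_coprime ((Nat.Prime.coprime_iff_not_dvd Fact.out).mpr hpn).symm)
  obtain ⟨n, rfl⟩ := Nat.exists_eq_add_of_le' hn
  exact dvd_of_pow_mul_eq_pow (separable_fibPoly hu).squarefree
    (not_isUnit_of_natDegree_pos _ (by rw [natDegree_fibPoly_succ]; omega))
    (isCoprime_fibPoly_X_sq_add_four hu).pow_right.isRelPrime h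

end Field

theorem fib_poly_jth_power_iff_general (j p : ℕ) (hj : 1 < j) [Fact p.Prime] (hp : Odd p)
    (hpj : Nat.Coprime p (2 * j)) (F : Type*) [Field F] [CharP F p]
    (a : ℕ) (ha : a = orderOf (p : ZMod (2 * j))) (n : ℕ) (hn : 1 ≤ n) :
    (∃ g : Polynomial F, fibPoly F n = g ^ j) ↔ ∃ k : ℕ, n = p ^ (a * k) := by
  subst ha
  constructor
  · rintro ⟨g, hg⟩
    obtain ⟨m, n', hpn', rfl⟩ :=
      Nat.exists_eq_pow_mul_and_not_dvd (n := n) (by omega) p (Fact.out : p.Prime).ne_one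
    rw [fibPoly_prime_pow_mul hp] at hg
    obtain rfl | hn' : n' = 1 ∨ 2 ≤ n' := by
      have : n' ≠ 0 := by rintro rfl; simp at hn
      omega
    · rw [fibPoly_one, one_pow, one_mul] at hg
      obtain ⟨k, hk⟩ := (orderOf_dvd_iff_dvd_pow_div_two hp).mpr
        (dvd_of_X_sq_add_four_pow_eq_pow hp hg)
      exact ⟨k, by rw [mul_one, hk]⟩
    · have hjp := dvd_of_fibPoly_pow_mul_eq_pow hp hpn' hn' hg
      have := ((hpj.coprime_dvd_right (dvd_mul_left j 2)).symm.pow_right m).eq_one_of_dvd hjp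
      omega
  · rintro ⟨k, rfl⟩
    obtain ⟨c, hc⟩ := (orderOf_dvd_iff_dvd_pow_div_two hp).mp (dvd_mul_right _ k)
    exact ⟨(X ^ 2 + 4) ^ c, by rw [fibPoly_prime_pow hp, hc, ← pow_mul, mul_comm]⟩

theorem fib_poly_jth_power_iff (j p : ℕ) (hj : 1 < j) [Fact p.Prime] (hp : Odd p)
    (hpj : Nat.Coprime p (2 * j)) (F : Type*) [Field F] [Fintype F] [CharP F p]
    (a : ℕ) (ha : a = orderOf (p : ZMod (2 * j))) (n : ℕ) (hn : 1 ≤ n) :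
    (∃ g : Polynomial F, fibPoly F n = g ^ j) ↔ ∃ k : ℕ, n = p ^ (a * k) :=
  fib_poly_jth_power_iff_general j p hj hp hpj F a ha n hn
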